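/- Let K ⊆ ℕ^s be a representative set (containing exactly one element of D(h⃗) for each h⃗ ∈ ℤ_p^m) and let F : {0,…,p^m−1} → ℂ. Then for all k, l ∈ K, Σ_{n=0}^{p^m−1} Σ_{v=0}^{p^m−1} F(n ⊖ v) wal_k(x_n) conj(wal_l(x_v)) = p^{2m} · F̃(k) if k = l and = 0 otherwise, where n ⊖ v denotes digitwise subtraction of the base-p digits of n and v modulo p, and F̃(k) = p^{−m} Σ_{n=0}^{p^m−1} F(n) wal_k(x_n). -/

import Mathlib

open scoped BigOperators

/-- `ω_p = exp(2πi/p)`. -/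
noncomputable def omega (p : ℕ) : ℂ := Complex.exp (2 * Real.pi * Complex.I / p)

/-- The `i`-th base-`p` digit of the natural number `n` (starting from `i = 0`). -/
def ndigit (p n i : ℕ) : ℕ := (n / p ^ i) % p

/-- The `i`-th base-`p` digit of the real number `x` (starting from `i = 1`):
`x_i = ⌊p^i x⌋ mod p`. -/
noncomputable def xdigit (p : ℕ) (x : ℝ) (i : ℕ) : ℕ := (⌊(p : ℝ) ^ i * x⌋).toNat % p

/-- The base-`p` Walsh function `wal_k(x) = ω_p^{x_1 k_0 + x_2 k_1 + ⋯}`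
(the digits of `k` vanish beyond index `k`, so the sum below is the full series). -/
noncomputable def wal (p k : ℕ) (x : ℝ) : ℂ :=
  omega p ^ (∑ i ∈ Finset.range (k + 1), xdigit p x (i + 1) * ndigit p k i)

/-- Multivariate Walsh function `wal_k(x) = ∏_j wal_{k_j}(x_j)`. -/
noncomputable def walS (p s : ℕ) (k : Fin s → ℕ) (x : Fin s → ℝ) : ℂ :=
  ∏ j, wal p (k j) (x j)

/-- The vector of the first `m` base-`p` digits of `n`, viewed in `ℤ_p^m`. -/
def nvec (p m : ℕ) (n : ℕ) : Fin m → ZMod p := fun i => (ndigit p n i : ZMod p)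

/-- The `n`-th point of the digital net generated by matrices `C = (C_1,…,C_s)`:
`x_{j,n} = Σ_{i=1}^m y_{j,n,i} p^{-i}` where `y⃗_{j,n} = C_j n⃗`. -/
noncomputable def netPoint (p s m : ℕ) (C : Fin s → Matrix (Fin m) (Fin m) (ZMod p)) (n : ℕ) :
    Fin s → ℝ :=
  fun j => ∑ i : Fin m, ((Matrix.mulVec (C j) (nvec p m n)) i).val / (p : ℝ) ^ (i.val + 1)

/-- `C·k = C_1ᵀ k⃗_1^{(m)} + ⋯ + C_sᵀ k⃗_s^{(m)} ∈ ℤ_p^m`. -/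
def Cdot (p s m : ℕ) (C : Fin s → Matrix (Fin m) (Fin m) (ZMod p)) (k : Fin s → ℕ) :
    Fin m → ZMod p :=
  ∑ j, Matrix.mulVec (Matrix.transpose (C j)) (nvec p m (k j))

/-- Digitwise addition modulo `p` of base-`p` digits: `k ⊕ l`. -/
def dadd (p k l : ℕ) : ℕ :=
  ∑ i ∈ Finset.range (k + l + 1), ((ndigit p k i + ndigit p l i) % p) * p ^ i

/-- Digitwise subtraction modulo `p` of base-`p` digits: `k ⊖ l`. -/
def dsub (p k l : ℕ) : ℕ :=
  ∑ i ∈ Finset.range (k + l + 1), ((ndigit p k i + (p - ndigit p l i)) % p) * p ^ i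
/-!
At the net points every Walsh function is an additive character of the digit vector:
`wal_k(x_n) = e(C·k ⬝ n⃗)` with `e = ZMod.stdAddChar`, and `n ⊖ v` has digit vector `n⃗ - v⃗`.
Transporting the double sum along the bijection `n ↦ n⃗` from `{0,…,p^m-1}` onto `ℤ_p^m` and
substituting `n⃗ = z + v⃗` splits it as `(Σ_z F(z) e(C·k ⬝ z)) · Σ_v e((C·k - C·l) ⬝ v)`. The last
sum is `p^m` if `C·k = C·l` and `0` otherwise, and on a representative set `C·k = C·l` forces
`k = l`.
-/

open Finset Matrix

lemma ndigit_sum_mul_pow {p m : ℕ} (c : Fin m → Fin p) (d : Fin m) :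
    ndigit p (∑ i, (c i : ℕ) * p ^ (i : ℕ)) d = c d :=
  congrArg (fun f : Fin m → Fin p => (f d : ℕ)) (finFunctionFinEquiv.symm_apply_apply c)

lemma sum_ndigit_mul_pow {p m n : ℕ} (hn : n < p ^ m) :
    ∑ i : Fin m, ndigit p n i * p ^ (i : ℕ) = n :=
  congrArg Fin.val (finFunctionFinEquiv.apply_symm_apply (⟨n, hn⟩ : Fin (p ^ m)))

lemma ndigit_eq_zero_of_lt {p n i : ℕ} (h : n < p ^ i) : ndigit p n i = 0 := by
  simp [ndigit, Nat.div_eq_of_lt h]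

lemma sum_range_eq_sum_range_of_eq_zero {M : Type*} [AddCommMonoid M] {f : ℕ → M} {a b : ℕ}
    (ha : ∀ i, a ≤ i → f i = 0) (hb : ∀ i, b ≤ i → f i = 0) :
    ∑ i ∈ range a, f i = ∑ i ∈ range b, f i := by
  wlog hab : a ≤ b generalizing a b
  · exact (this hb ha (by omega)).symm
  exact sum_subset (range_subset_range.2 hab) fun i _ hi => ha i (by simpa using hi)

lemma nvec_injOn {p m : ℕ} : Set.InjOn (nvec p m) (range (p ^ m)) := by
  intro n hn v hv h
  rw [← sum_ndigit_mul_pow (mem_range.1 hn), ← sum_ndigit_mul_pow (mem_range.1 hv)]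
  refine sum_congr rfl fun i _ => ?_
  have hi := (ZMod.natCast_eq_natCast_iff' _ _ p).1 (congrFun h i)
  simp only [ndigit, Nat.mod_mod] at hi
  rw [ndigit, ndigit, hi]

lemma sum_range_pow_nvec {M : Type*} [AddCommMonoid M] {p m : ℕ} [NeZero p]
    (g : (Fin m → ZMod p) → M) :
    ∑ n ∈ range (p ^ m), g (nvec p m n) = ∑ y, g y := by
  rw [← sum_image nvec_injOn]
  congr
  apply eq_univ_of_card
  rw [card_image_of_injOn nvec_injOn, card_range, Fintype.card_fun, ZMod.card, Fintype.card_fin]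

def ofDigitVec (p : ℕ) {m : ℕ} (y : Fin m → ZMod p) : ℕ := ∑ i, (y i).val * p ^ (i : ℕ)

lemma ofDigitVec_nvec {p m n : ℕ} (hn : n < p ^ m) : ofDigitVec p (nvec p m n) = n := by
  simp only [ofDigitVec, nvec, ZMod.val_natCast, ndigit, Nat.mod_mod]
  exact sum_ndigit_mul_pow hn

lemma lt_pow_of_le {p : ℕ} (hp : 1 < p) {n i : ℕ} (h : n ≤ i) : n < p ^ i :=
  (Nat.lt_pow_self hp).trans_le (Nat.pow_le_pow_right (by omega) h)

lemma dsub_eq_ofDigitVec {p m n v : ℕ} (hp : 1 < p) (hn : n < p ^ m) (hv : v < p ^ m) :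
    dsub p n v = ofDigitVec p (nvec p m n - nvec p m v) := by
  have hvanish : ∀ i, n < p ^ i → v < p ^ i →
      (ndigit p n i + (p - ndigit p v i)) % p * p ^ i = 0 := by
    intro i hni hvi
    simp [ndigit_eq_zero_of_lt hni, ndigit_eq_zero_of_lt hvi]
  have hmono : ∀ {a i}, a < p ^ m → m ≤ i → a < p ^ i := fun ha hi =>
    ha.trans_le (Nat.pow_le_pow_right (by omega) hi)
  rw [dsub, sum_range_eq_sum_range_of_eq_zero (b := m)
      (fun i hi => hvanish i (lt_pow_of_le hp (by omega)) (lt_pow_of_le hp (by omega)))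
      (fun i hi => hvanish i (hmono hn hi) (hmono hv hi)),
    ← Fin.sum_univ_eq_sum_range (fun i => (ndigit p n i + (p - ndigit p v i)) % p * p ^ i)]
  refine sum_congr rfl fun i _ => ?_
  have hvp : ndigit p v i ≤ p := (Nat.mod_lt _ (by omega)).le
  simp only [nvec, Pi.sub_apply]
  rw [← ZMod.val_natCast, Nat.cast_add, Nat.cast_sub hvp,
    ZMod.natCast_self, zero_sub, ← sub_eq_add_neg]

lemma xdigit_natCast_div_pow {p : ℕ} (hp : 0 < p) (N l m : ℕ) :
    xdigit p ((N : ℝ) / (p : ℝ) ^ m) l = if l ≤ m then ndigit p N (m - l) else 0 := by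
  have hp' : (p : ℝ) ≠ 0 := by positivity
  unfold xdigit
  split_ifs with hlm
  · have h : (p : ℝ) ^ l * ((N : ℝ) / (p : ℝ) ^ m) = (N : ℝ) / ((p ^ (m - l) : ℕ) : ℝ) := by
      rw [← Nat.add_sub_cancel' hlm]
      push_cast
      rw [pow_add, Nat.add_sub_cancel_left]
      field_simp
    rw [h, Int.floor_toNat, Nat.floor_div_natCast, Nat.floor_natCast, ndigit]
  · have h : (p : ℝ) ^ l * ((N : ℝ) / (p : ℝ) ^ m) = ((N * p ^ (l - m) : ℕ) : ℝ) := by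
      rw [← Nat.add_sub_cancel' (show m ≤ l by omega)]
      push_cast
      rw [pow_add, Nat.add_sub_cancel_left]
      field_simp
    rw [h, Int.floor_natCast, Int.toNat_natCast, Nat.mul_mod, Nat.pow_mod, Nat.mod_self,
      zero_pow (by omega), Nat.zero_mod, mul_zero, Nat.zero_mod]

lemma sum_val_div_pow_eq {p m : ℕ} [NeZero p] (y : Fin m → ZMod p) :
    ∑ i, ((y i).val : ℝ) / (p : ℝ) ^ (i.val + 1) =
      ((∑ i, (y (Fin.rev i)).val * p ^ (i : ℕ) : ℕ) : ℝ) / (p : ℝ) ^ m := by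
  have hp : (p : ℝ) ≠ 0 := NeZero.ne _
  rw [← Equiv.sum_comp Fin.revPerm]
  push_cast
  rw [sum_div]
  refine sum_congr rfl fun i _ => ?_
  have hm : (p : ℝ) ^ m = p ^ (i : ℕ) * p ^ ((i.rev : ℕ) + 1) := by
    rw [← pow_add, Fin.val_rev]; congr 1; omega
  rw [Fin.revPerm_apply, hm, mul_comm ((p : ℝ) ^ (i : ℕ)), mul_div_mul_right _ _ (pow_ne_zero _ hp)]

lemma xdigit_sum_val_div_pow {p m : ℕ} [NeZero p] (y : Fin m → ZMod p) (i : ℕ) :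
    xdigit p (∑ i, ((y i).val : ℝ) / (p : ℝ) ^ (i.val + 1)) (i + 1) =
      if h : i < m then (y ⟨i, h⟩).val else 0 := by
  rw [sum_val_div_pow_eq, xdigit_natCast_div_pow (NeZero.pos p)]
  split_ifs with h1 h2 h2
  · have hrev : m - (i + 1) = (Fin.rev ⟨i, h2⟩ : ℕ) := by rw [Fin.val_rev]
    rw [hrev, ndigit_sum_mul_pow (fun d => ⟨(y (Fin.rev d)).val, ZMod.val_lt _⟩), Fin.rev_rev]
  · omega
  · omega
  · rfl

lemma AddChar.map_sum_eq_prod {ι A M : Type*} [AddCommMonoid A] [CommMonoid M]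
    (ψ : AddChar A M) (s : Finset ι) (f : ι → A) : ψ (∑ i ∈ s, f i) = ∏ i ∈ s, ψ (f i) := by
  induction s using Finset.cons_induction with
  | empty => simp
  | cons a s ha ih => rw [sum_cons, prod_cons, AddChar.map_add_eq_mul, ih]

lemma sum_sum_sub_mul_addChar_mul_conj {G : Type*} [AddCommGroup G] [Fintype G] (Φ : G → ℂ)
    (ψ φ : AddChar G ℂ) :
    ∑ x, ∑ y, Φ (x - y) * ψ x * starRingEnd ℂ (φ y) =
      (∑ z, Φ z * ψ z) * ∑ y, ψ y * starRingEnd ℂ (φ y) := by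
  rw [sum_mul_sum, sum_comm]
  conv_rhs => rw [sum_comm]
  refine sum_congr rfl fun y _ => ?_
  rw [← Equiv.sum_comp (Equiv.addRight y)]
  refine sum_congr rfl fun z _ => ?_
  simp only [Equiv.coe_addRight, add_sub_cancel_right, AddChar.map_add_eq_mul]
  ring

lemma omega_pow_eq_stdAddChar {p : ℕ} [NeZero p] (a : ℕ) :
    omega p ^ a = ZMod.stdAddChar (a : ZMod p) := by
  rw [omega, ← Complex.exp_nat_mul, ← Int.cast_natCast (R := ZMod p), ZMod.stdAddChar_coe]
  congr 1
  push_cast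
  ring

lemma starRingEnd_stdAddChar {p : ℕ} [NeZero p] (a : ZMod p) :
    starRingEnd ℂ (ZMod.stdAddChar a) = ZMod.stdAddChar (-a) := by
  rw [ZMod.stdAddChar_apply, ZMod.stdAddChar_apply, AddChar.map_neg_eq_inv,
    Circle.coe_inv_eq_conj]

lemma sum_stdAddChar_dotProduct {p m : ℕ} [NeZero p] (h : Fin m → ZMod p) :
    ∑ y, ZMod.stdAddChar (h ⬝ᵥ y) = if h = 0 then (p : ℂ) ^ m else 0 := by
  simp only [dotProduct, AddChar.map_sum_eq_prod]
  rw [← Fintype.piFinset_univ,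
    ← prod_univ_sum (fun _ => univ) fun i d => ZMod.stdAddChar (h i * d)]
  simp only [mul_comm (h _), AddChar.sum_mulShift _ (ZMod.isPrimitive_stdAddChar p), ZMod.card,
    Nat.cast_ite, Nat.cast_zero, Fintype.prod_ite_zero, prod_const, card_univ, Fintype.card_fin,
    funext_iff, Pi.zero_apply]

noncomputable def dotChar {p m : ℕ} [NeZero p] (A : Fin m → ZMod p) :
    AddChar (Fin m → ZMod p) ℂ :=
  ZMod.stdAddChar.compAddMonoidHom (AddMonoidHom.mk' (A ⬝ᵥ ·) (dotProduct_add A))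

lemma dotChar_apply {p m : ℕ} [NeZero p] (A y : Fin m → ZMod p) :
    dotChar A y = ZMod.stdAddChar (A ⬝ᵥ y) := rfl

lemma dotChar_mul_conj {p m : ℕ} [NeZero p] (A B y : Fin m → ZMod p) :
    dotChar A y * starRingEnd ℂ (dotChar B y) = dotChar (A - B) y := by
  rw [dotChar_apply, dotChar_apply, dotChar_apply, starRingEnd_stdAddChar,
    ← AddChar.map_add_eq_mul, sub_dotProduct, sub_eq_add_neg]

lemma sum_dotChar_mul_conj {p m : ℕ} [NeZero p] (A B : Fin m → ZMod p) :
    ∑ y, dotChar A y * starRingEnd ℂ (dotChar B y) = if A = B then (p : ℂ) ^ m else 0 := by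
  simp_rw [dotChar_mul_conj, dotChar_apply]
  rw [sum_stdAddChar_dotProduct]
  simp only [sub_eq_zero]

lemma wal_netPoint {p s m : ℕ} [NeZero p] (hp : 1 < p)
    (C : Fin s → Matrix (Fin m) (Fin m) (ZMod p)) (n : ℕ) (j : Fin s) (k : ℕ) :
    wal p k (netPoint p s m C n j) = ZMod.stdAddChar ((C j *ᵥ nvec p m n) ⬝ᵥ nvec p m k) := by
  have hx : ∀ i, xdigit p (netPoint p s m C n j) (i + 1) =
      if h : i < m then ((C j *ᵥ nvec p m n) ⟨i, h⟩).val else 0 :=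
    xdigit_sum_val_div_pow _
  rw [wal, omega_pow_eq_stdAddChar,
    sum_range_eq_sum_range_of_eq_zero (b := m)
      (fun i hi => by rw [ndigit_eq_zero_of_lt (lt_pow_of_le hp (by omega)), mul_zero])
      (fun i hi => by rw [hx, dif_neg (by omega), zero_mul]),
    ← Fin.sum_univ_eq_sum_range (fun i => xdigit p (netPoint p s m C n j) (i + 1) * ndigit p k i)]
  simp only [hx, Fin.is_lt, dif_pos, Fin.eta, Nat.cast_sum, Nat.cast_mul, ZMod.natCast_val,
    ZMod.cast_id', id, dotProduct, nvec]

lemma walS_netPoint {p s m : ℕ} [NeZero p] (hp : 1 < p)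
    (C : Fin s → Matrix (Fin m) (Fin m) (ZMod p)) (k : Fin s → ℕ) (n : ℕ) :
    walS p s k (netPoint p s m C n) = dotChar (Cdot p s m C k) (nvec p m n) := by
  rw [walS, dotChar_apply, Cdot, sum_dotProduct, AddChar.map_sum_eq_prod]
  refine prod_congr rfl fun j _ => ?_
  rw [wal_netPoint hp, mulVec_transpose, ← dotProduct_mulVec, dotProduct_comm]

theorem statement19_general (p s m : ℕ) [Fact p.Prime]
    (C : Fin s → Matrix (Fin m) (Fin m) (ZMod p))
    (K : Finset (Fin s → ℕ))
    (hK : ∀ h : Fin m → ZMod p, ∃! k, k ∈ K ∧ Cdot p s m C k = h)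
    (F : ℕ → ℂ) (k l : Fin s → ℕ) (hk : k ∈ K) (hl : l ∈ K) :
    ∑ n ∈ Finset.range (p ^ m), ∑ v ∈ Finset.range (p ^ m),
        F (dsub p n v) * walS p s k (netPoint p s m C n) *
          (starRingEnd ℂ) (walS p s l (netPoint p s m C v)) =
      if k = l then
        (p : ℂ) ^ (2 * m) * (((p : ℂ) ^ m)⁻¹ *
          ∑ n ∈ Finset.range (p ^ m), F n * walS p s k (netPoint p s m C n))
      else 0 := by
  have hp : 1 < p := (Fact.out : p.Prime).one_lt
  have : NeZero p := ⟨by omega⟩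
  have hLHS : ∑ n ∈ range (p ^ m), ∑ v ∈ range (p ^ m),
      F (dsub p n v) * walS p s k (netPoint p s m C n) *
        starRingEnd ℂ (walS p s l (netPoint p s m C v)) =
      ∑ x, ∑ y, (F ∘ ofDigitVec p) (x - y) * dotChar (Cdot p s m C k) x *
        starRingEnd ℂ (dotChar (Cdot p s m C l) y) := by
    rw [← sum_range_pow_nvec]
    refine sum_congr rfl fun n hn => ?_
    rw [← sum_range_pow_nvec]
    refine sum_congr rfl fun v hv => ?_
    rw [walS_netPoint hp, walS_netPoint hp, Function.comp_apply,
      dsub_eq_ofDigitVec hp (mem_range.1 hn) (mem_range.1 hv)]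
  have hRHS : ∑ n ∈ range (p ^ m), F n * walS p s k (netPoint p s m C n) =
      ∑ z, (F ∘ ofDigitVec p) z * dotChar (Cdot p s m C k) z := by
    rw [← sum_range_pow_nvec]
    exact sum_congr rfl fun n hn => by
      rw [walS_netPoint hp, Function.comp_apply, ofDigitVec_nvec (mem_range.1 hn)]
  have hCdot : Cdot p s m C k = Cdot p s m C l ↔ k = l :=
    ⟨fun h => (hK _).unique ⟨hk, h⟩ ⟨hl, rfl⟩, congrArg _⟩
  rw [hLHS, sum_sum_sub_mul_addChar_mul_conj, sum_dotChar_mul_conj, hRHS]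
  simp only [hCdot]
  split_ifs
  · rw [two_mul, pow_add]
    field_simp
  · rw [mul_zero]

/-- double sum of a convolution kernel over the digital net against Walsh
functions indexed by representatives `k, l ∈ K`. -/
theorem statement19 (p s m : ℕ) [Fact p.Prime] (hs : 1 ≤ s) (hm : 1 ≤ m)
    (C : Fin s → Matrix (Fin m) (Fin m) (ZMod p))
    (K : Finset (Fin s → ℕ))
    (hK : ∀ h : Fin m → ZMod p, ∃! k, k ∈ K ∧ Cdot p s m C k = h)
    (F : ℕ → ℂ) (k l : Fin s → ℕ) (hk : k ∈ K) (hl : l ∈ K) :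
    ∑ n ∈ Finset.range (p ^ m), ∑ v ∈ Finset.range (p ^ m),
        F (dsub p n v) * walS p s k (netPoint p s m C n) *
          (starRingEnd ℂ) (walS p s l (netPoint p s m C v)) =
      if k = l then
        (p : ℂ) ^ (2 * m) * (((p : ℂ) ^ m)⁻¹ *
          ∑ n ∈ Finset.range (p ^ m), F n * walS p s k (netPoint p s m C n))
      else 0 :=
  statement19_general p s m C K hK F k l hk hl
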